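/- Let T>0, μ≥1, M≥1, λ>0 and α, φ, θ as before (spatially constant case). If λ ≥ T², then |d/dt (θ(t)^{-2} φ(t)^{-2})| ≤ C T λ θ(t)^{-2} for all t ∈ (0,T), where C depends only on μ and M. -/

import Mathlib

/-!
With `g s = s (T - s)` and `a = e^μ - e^{2μM}` we have `θ⁻² φ⁻² = exp (-2λa/g) · g² · e^{-2μ}`,
so both terms of the product rule carry the factor `θ⁻² g' e^{-2μ}` and the derivative is
`θ⁻² · g' · (2λa + 2g) · e^{-2μ}`. Since `|g'| = |T - 2t| ≤ T` and `0 < g ≤ T²/4 ≤ λ/4`, this is at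
most `(2|a| + 1) e^{-2μ} · T λ θ⁻²`.
-/

open Real Set

theorem hasDerivAt_inv_sq_exp_mul_inv_sq_div {g : ℝ → ℝ} {g' t : ℝ} (a b lam : ℝ)
    (hg : HasDerivAt g g' t) (ht : g t ≠ 0) :
    HasDerivAt (fun s => ((exp (lam * (a / g s))) ^ 2)⁻¹ * ((b / g s) ^ 2)⁻¹)
      (((exp (lam * (a / g t))) ^ 2)⁻¹ * (g' * (2 * lam * a + 2 * g t) / b ^ 2)) t := by
  have inv_sq_exp : ∀ x : ℝ, ((exp x) ^ 2)⁻¹ = exp (-(2 * x)) := fun x => by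
    rw [← exp_nat_mul, ← exp_neg]; norm_num
  have hfun : (fun s => ((exp (lam * (a / g s))) ^ 2)⁻¹ * ((b / g s) ^ 2)⁻¹)
      = fun s => exp (-(2 * lam * a) * (g s)⁻¹) * (g s ^ 2 / b ^ 2) := by
    funext s
    rw [inv_sq_exp, ← inv_pow, inv_div, div_pow]
    ring_nf
  rw [hfun, inv_sq_exp]
  have hexp := ((hg.inv ht).const_mul (-(2 * lam * a))).exp
  have hpoly := (hg.pow 2).div_const (b ^ 2)
  refine (hexp.mul hpoly).congr_deriv ?_
  rw [show -(2 * (lam * (a / g t))) = -(2 * lam * a) * (g t)⁻¹ by ring]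
  simp only [Pi.inv_apply, Pi.pow_apply]
  field_simp
  ring

theorem hasDerivAt_mul_sub_self (T t : ℝ) :
    HasDerivAt (fun s : ℝ => s * (T - s)) (T - 2 * t) t := by
  refine ((hasDerivAt_id t).mul ((hasDerivAt_const t T).sub (hasDerivAt_id t))).congr_deriv ?_
  simp only [Pi.sub_apply, id_eq]
  ring

theorem abs_sub_two_mul_le {T t : ℝ} (ht : t ∈ Icc 0 T) : |T - 2 * t| ≤ T :=
  abs_le.2 ⟨by linarith [ht.2], by linarith [ht.1]⟩

theorem mul_sub_self_le (T t : ℝ) : t * (T - t) ≤ T ^ 2 / 4 := by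
  nlinarith [sq_nonneg (T - 2 * t)]

theorem stmt_6_general (μ M : ℝ) :
    ∃ C > (0:ℝ), ∀ T > (0:ℝ), ∀ lam > (0:ℝ), T ^ 2 ≤ lam →
      ∀ t ∈ Set.Ioo (0:ℝ) T,
        |deriv (fun s : ℝ =>
            ((Real.exp (lam * ((Real.exp μ - Real.exp (2 * μ * M)) / (s * (T - s))))) ^ 2)⁻¹ *
              ((Real.exp μ / (s * (T - s))) ^ 2)⁻¹) t|
          ≤ C * T * lam *
              ((Real.exp (lam * ((Real.exp μ - Real.exp (2 * μ * M)) / (t * (T - t))))) ^ 2)⁻¹ := by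
  set a := exp μ - exp (2 * μ * M)
  refine ⟨(2 * |a| + 1) / exp μ ^ 2, by positivity, fun T _ lam hlam hTlam t ht => ?_⟩
  have hg : 0 < t * (T - t) := mul_pos ht.1 (sub_pos.2 ht.2)
  rw [(hasDerivAt_inv_sq_exp_mul_inv_sq_div a (exp μ) lam (hasDerivAt_mul_sub_self T t)
    hg.ne').deriv]
  set θ := ((exp (lam * (a / (t * (T - t))))) ^ 2)⁻¹
  have hfactor : |2 * lam * a + 2 * (t * (T - t))| ≤ (2 * |a| + 1) * lam := by
    have hg_le := mul_sub_self_le T t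
    have hlam_a := mul_le_mul_of_nonneg_left (le_abs_self a) hlam.le
    have hlam_neg_a := mul_le_mul_of_nonneg_left (neg_abs_le a) hlam.le
    rw [abs_le]
    constructor <;> nlinarith
  calc |θ * ((T - 2 * t) * (2 * lam * a + 2 * (t * (T - t))) / exp μ ^ 2)|
      = θ * (|T - 2 * t| * |2 * lam * a + 2 * (t * (T - t))|) / exp μ ^ 2 := by
        rw [abs_mul, abs_div, abs_mul, abs_of_pos (by positivity : 0 < θ),
          abs_of_pos (by positivity : 0 < exp μ ^ 2)]
        ring
    _ ≤ θ * (T * ((2 * |a| + 1) * lam)) / exp μ ^ 2 := by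
        gcongr
        exact abs_sub_two_mul_le (Ioo_subset_Icc_self ht)
    _ = (2 * |a| + 1) / exp μ ^ 2 * T * lam * θ := by ring

theorem stmt_6 (μ M : ℝ) (hμ : 1 ≤ μ) (hM : 1 ≤ M) :
    ∃ C > (0:ℝ), ∀ T > (0:ℝ), ∀ lam > (0:ℝ), T ^ 2 ≤ lam →
      ∀ t ∈ Set.Ioo (0:ℝ) T,
        |deriv (fun s : ℝ =>
            ((Real.exp (lam * ((Real.exp μ - Real.exp (2 * μ * M)) / (s * (T - s))))) ^ 2)⁻¹ *
              ((Real.exp μ / (s * (T - s))) ^ 2)⁻¹) t|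
          ≤ C * T * lam *
              ((Real.exp (lam * ((Real.exp μ - Real.exp (2 * μ * M)) / (t * (T - t))))) ^ 2)⁻¹ :=
  stmt_6_general μ M
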